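/- One step of the bottom-up algorithm transforms level k into level k+1: let h : List X → Y and g : List Y → Y satisfy h ys = g (List.map h (subs ys)) for every list ys with 2 ≤ length ys. Then for every list xs : List X and every k with 1 ≤ k and k < length xs, mapB g (up (mapB h (ch k xs))) = mapB h (ch (k+1) xs). -/

import Mathlib

def subs {α : Type} : List α → List (List α)
  | [] => []
  | x :: xs => (subs xs).map (x :: ·) ++ [xs]

def choose {α : Type} : ℕ → List α → List (List α)
  | 0, _ => [[]]
  | k+1, xs =>
    if k + 1 = xs.length then [xs]
    else
      match xs with
      | [] => []
      | x :: xs' => (choose k xs').map (x :: ·) ++ choose (k+1) xs'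

inductive B (α : Type) : Type
  | T : α → B α
  | N : B α → B α → B α

def mapB {α β : Type} (f : α → β) : B α → B β
  | .T a => .T (f a)
  | .N t u => .N (mapB f t) (mapB f u)

def zipBW {α β γ : Type} (f : α → β → γ) : B α → B β → B γ
  | .T a, .T b => .T (f a b)
  | .N t u, .N t' u' => .N (zipBW f t t') (zipBW f u u')
  | .T a, v => mapB (f a) v
  | v, .T b => mapB (f · b) v

def ch {α : Type} : ℕ → List α → B (List α)
  | 0, _ => .T []
  | k+1, xs =>
    if k + 1 = xs.length then .T xs
    else
      match xs with
      | [] => .T []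
      | x :: xs' => .N (mapB (x :: ·) (ch k xs')) (ch (k+1) xs')

def snoc {α : Type} (ys : List α) (z : α) : List α := ys ++ [z]

def unT {α : Type} [Inhabited α] : B α → α
  | .T p => p
  | .N _ _ => default

def up {α : Type} : B α → B (List α)
  | .N (.T p) (.T q) => .T [p, q]
  | .N t (.T q) => .T (unT (up t) ++ [q])
  | .N (.T p) u => .N (mapB (fun q => [p, q]) u) (up u)
  | .N t u => .N (zipBW snoc (up t) u) (up u)
  | .T p => .T [p]

def ex {α : Type} [Inhabited α] : List α → α
  | [x] => x
  | _ => default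

def td {X Y : Type} [Inhabited X] [Inhabited Y] (f : X → Y) (g : List Y → Y) : ℕ → List X → Y
  | 0, xs => f (ex xs)
  | n+1, xs => g ((subs xs).map (td f g n))

def td' {Y : Type} [Inhabited Y] (g : List Y → Y) : ℕ → List Y → Y
  | 0, xs => ex xs
  | n+1, xs => g ((subs xs).map (td' g n))

/-!
For `1 ≤ k < length xs`, `up (ch k xs) = mapB subs (ch (k+1) xs)`: `up` rearranges the tree of
`k`-sublists of `xs` into the tree of `(k+1)`-sublists, each tip replaced by the list of its
immediate sublists. By induction on `xs`, `ch (k+1) (x :: xs)` splits into the `k`-sublists of `xs`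
prefixed by `x` and the `(k+1)`-sublists of `xs`, and `zipBW snoc` pairs them exactly as
`subs (x :: ys) = map (x :: ·) (subs ys) ++ [ys]` does. Since `up` is natural in the tip labels,
`up (mapB h (ch k xs))` is `mapB (map h ∘ subs) (ch (k+1) xs)`, whose tips have length `k + 1 ≥ 2`,
where `g ∘ map h ∘ subs = h`.
-/

section Trees

variable {α β γ δ : Type}

theorem mapB_mapB (f : β → γ) (g : α → β) (t : B α) :
    mapB f (mapB g t) = mapB (fun a => f (g a)) t := by
  induction t with
  | T a => rfl
  | N l r ihl ihr => simp only [mapB, ihl, ihr]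

theorem unT_mapB_map (f : α → β) (t : B (List α)) :
    unT (mapB (List.map f) t) = List.map f (unT t) := by
  cases t <;> rfl

theorem zipBW_T_left (f : α → β → γ) (a : α) (v : B β) : zipBW f (.T a) v = mapB (f a) v := by
  cases v <;> rfl

theorem zipBW_T_right (f : α → β → γ) (v : B α) (b : β) :
    zipBW f v (.T b) = mapB (f · b) v := by
  cases v <;> rfl

theorem mapB_zipBW (k : γ → δ) (f : α → β → γ) (a : B α) (b : B β) :
    mapB k (zipBW f a b) = zipBW (fun x y => k (f x y)) a b := by
  induction a generalizing b with
  | T x => rw [zipBW_T_left, zipBW_T_left, mapB_mapB]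
  | N l r ihl ihr =>
    cases b with
    | T y => rw [zipBW_T_right, zipBW_T_right, mapB_mapB]
    | N l' r' => simp only [zipBW, mapB, ihl, ihr]

theorem zipBW_mapB_mapB {α' β' : Type} (f : α' → β' → γ) (g : α → α') (g' : β → β')
    (a : B α) (b : B β) :
    zipBW f (mapB g a) (mapB g' b) = zipBW (fun x y => f (g x) (g' y)) a b := by
  induction a generalizing b with
  | T x => rw [mapB, zipBW_T_left, zipBW_T_left, mapB_mapB]
  | N l r ihl ihr =>
    cases b with
    | T y => rw [mapB, zipBW_T_right, zipBW_T_right, mapB_mapB]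
    | N l' r' => simp only [zipBW, mapB, ihl, ihr]

theorem zipBW_mapB_left_self (f : β → α → γ) (g : α → β) (t : B α) :
    zipBW f (mapB g t) t = mapB (fun a => f (g a) a) t := by
  induction t with
  | T a => rfl
  | N l r ihl ihr => simp only [mapB, zipBW, ihl, ihr]

theorem up_N_T (t : B α) (q : α) : up (.N t (.T q)) = .T (unT (up t) ++ [q]) := by
  cases t <;> rfl

theorem up_N_of_ne_T {u : B α} (hu : ∀ q, u ≠ .T q) (t : B α) :
    up (.N t u) = .N (zipBW snoc (up t) u) (up u) := by
  cases u with
  | T q => exact absurd rfl (hu q)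
  | N c d => cases t <;> rfl

theorem up_N_T_of_zipBW_snoc_eq {t : B α} {q : α} {r : List α}
    (h : zipBW snoc (up t) (.T q) = .T r) : up (.N t (.T q)) = .T r := by
  rw [up_N_T]
  cases hup : up t with
  | T p => rw [hup] at h; exact h
  | N _ _ => rw [hup] at h; cases h

theorem up_mapB (f : α → β) (t : B α) : up (mapB f t) = mapB (List.map f) (up t) := by
  induction t with
  | T p => rfl
  | N l r ihl ihr =>
    cases r with
    | T q => simp only [mapB, up_N_T, ihl, unT_mapB_map, List.map_append, List.map_singleton]
    | N c d =>
      show up (.N (mapB f l) (mapB f (.N c d))) = _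
      rw [up_N_of_ne_T (fun q => by simp [mapB]), up_N_of_ne_T (fun q => by simp), ihl, ihr,
        zipBW_mapB_mapB, mapB, mapB_zipBW]
      simp only [snoc, List.map_append, List.map_singleton]

end Trees

section Sublists

variable {α β : Type}

theorem ch_zero (xs : List α) : ch 0 xs = .T [] := by
  rw [ch.eq_def]

theorem ch_succ_of_eq_length {k : ℕ} {xs : List α} (hk : k + 1 = xs.length) :
    ch (k + 1) xs = .T xs := by
  rw [ch.eq_def]
  simp only [hk, if_true]

theorem ch_succ_cons_of_ne_length {k : ℕ} (x : α) {xs : List α} (hk : k ≠ xs.length) :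
    ch (k + 1) (x :: xs) = .N (mapB (x :: ·) (ch k xs)) (ch (k + 1) xs) := by
  simp only [ch, List.length_cons, Nat.add_right_cancel_iff, hk, if_false]

theorem ch_ne_T {k : ℕ} {xs : List α} (hk1 : 1 ≤ k) (hk2 : k < xs.length) (q : List α) :
    ch k xs ≠ .T q := by
  obtain ⟨k, rfl⟩ := Nat.exists_eq_add_of_le' hk1
  obtain ⟨x, xs, rfl⟩ := List.exists_cons_of_length_pos (by omega : 0 < xs.length)
  rw [ch_succ_cons_of_ne_length x (by simp at hk2; omega)]
  nofun

theorem mapB_ch_congr {f f' : List α → β} {k : ℕ} {xs : List α} (hk : k ≤ xs.length)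
    (hf : ∀ ys : List α, ys.length = k → f ys = f' ys) :
    mapB f (ch k xs) = mapB f' (ch k xs) := by
  induction xs generalizing f f' k with
  | nil =>
    obtain rfl : k = 0 := by simpa using hk
    rw [ch_zero]
    exact congrArg B.T (hf [] rfl)
  | cons x xs ih =>
    rcases k with _ | k
    · rw [ch_zero]
      exact congrArg B.T (hf [] rfl)
    by_cases he : k = xs.length
    · rw [ch_succ_of_eq_length (by simp [he])]
      exact congrArg B.T (hf _ (by simp [he]))
    · rw [ch_succ_cons_of_ne_length x he]
      simp only [mapB, mapB_mapB]
      rw [ih (by simp at hk; omega) fun ys hy => hf (x :: ys) (by simp [hy]),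
        ih (by simp at hk; omega) hf]

theorem zipBW_snoc_up_mapB_cons_ch (x : α) {k : ℕ} {xs : List α} (hk : k + 1 ≤ xs.length)
    (hup : ∀ {j}, 1 ≤ j → j < xs.length → up (ch j xs) = mapB subs (ch (j + 1) xs)) :
    zipBW snoc (up (mapB (x :: ·) (ch k xs))) (ch (k + 1) xs) =
      mapB (fun ys => subs (x :: ys)) (ch (k + 1) xs) := by
  rcases k with _ | k
  · rw [ch_zero]
    show zipBW snoc (.T [[x]]) _ = _
    rw [zipBW_T_left]
    refine mapB_ch_congr hk fun ys hy => ?_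
    obtain ⟨y, rfl⟩ := List.length_eq_one_iff.mp hy
    rfl
  · rw [up_mapB, hup (by omega) (by omega), mapB_mapB, zipBW_mapB_left_self]
    rfl

theorem up_ch {k : ℕ} {xs : List α} (hk1 : 1 ≤ k) (hk2 : k < xs.length) :
    up (ch k xs) = mapB subs (ch (k + 1) xs) := by
  induction xs generalizing k with
  | nil => simp at hk2
  | cons x xs ih =>
    obtain ⟨k, rfl⟩ := Nat.exists_eq_add_of_le' hk1
    have hk : k + 1 ≤ xs.length := by simpa using hk2
    have hleft := zipBW_snoc_up_mapB_cons_ch x hk ih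
    rw [ch_succ_cons_of_ne_length (k := k) x (by omega)]
    rcases hk.lt_or_eq with hlt | heq
    · rw [up_N_of_ne_T (ch_ne_T (by omega) hlt), hleft, ih (by omega) hlt,
        ch_succ_cons_of_ne_length (k := k + 1) x (by omega)]
      simp only [mapB, mapB_mapB]
    · rw [ch_succ_of_eq_length heq] at hleft ⊢
      rw [ch_succ_of_eq_length (by simp [heq])]
      exact up_N_T_of_zipBW_snoc_eq hleft

end Sublists

theorem stmt9 {X Y : Type} (h : List X → Y) (g : List Y → Y)
    (hg : ∀ ys : List X, 2 ≤ ys.length → h ys = g (List.map h (subs ys)))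
    (xs : List X) (k : ℕ) (hk1 : 1 ≤ k) (hk2 : k < xs.length) :
    mapB g (up (mapB h (ch k xs))) = mapB h (ch (k + 1) xs) := by
  rw [up_mapB, up_ch hk1 hk2, mapB_mapB, mapB_mapB]
  exact mapB_ch_congr hk2 fun ys hy => (hg ys (by omega)).symm
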